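/- Let (E, ρ) be a metric space, 0 < α < 1, C₁ ≥ 1, and suppose the Euclidean-type distance d on E satisfies C₁^{-1}·d(x,y) ≤ ρ(x,y)^α ≤ C₁·d(x,y) for all x,y ∈ E. Then for every s > 0 there is a constant C' such that for all x, y, z ∈ E with z ≠ x and z ≠ y, |ρ(x,z)^{-s} - ρ(y,z)^{-s}| ≤ C'·d(x,y)^{1/α}/min(d(x,z), d(y,z))^{s/α + 1/α}. -/
import Mathlib

lemma rpow_neg_sub_le_aux17 (s : ℝ) (hs : 0 < s) {a b : ℝ} (ha : 0 < a) (hab : a ≤ b) :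
    |a ^ (-s) - b ^ (-s)| ≤ s * a ^ (-s - 1) * (b - a) := by
  have key := Convex.norm_image_sub_le_of_norm_hasDerivWithin_le
    (f := fun t : ℝ => t ^ (-s)) (f' := fun t : ℝ => (-s) * t ^ (-s - 1))
    (C := s * a ^ (-s - 1)) (s := Set.Icc a b)
    (fun t ht => ((Real.hasDerivAt_rpow_const
      (Or.inl (lt_of_lt_of_le ha ht.1).ne')).hasDerivWithinAt))
    (fun t ht => by
      have htpos : 0 < t := lt_of_lt_of_le ha ht.1
      have h1 : t ^ (-s - 1) ≤ a ^ (-s - 1) :=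
        Real.rpow_le_rpow_of_nonpos ha ht.1 (by linarith)
      have h2 : 0 ≤ t ^ (-s - 1) := (Real.rpow_pos_of_pos htpos _).le
      calc ‖(-s) * t ^ (-s - 1)‖ = s * t ^ (-s - 1) := by
            rw [norm_mul, Real.norm_eq_abs, Real.norm_eq_abs, abs_neg,
              abs_of_pos hs, abs_of_nonneg h2]
        _ ≤ s * a ^ (-s - 1) := by nlinarith)
    (convex_Icc a b) (Set.left_mem_Icc.2 hab) (Set.right_mem_Icc.2 hab)
  rw [Real.norm_eq_abs, Real.norm_eq_abs, abs_of_nonneg (sub_nonneg.2 hab)] at key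
  rw [abs_sub_comm]
  exact key

/-- Snowflake estimate: if `ρ` is a metric on `E` and `d` is a metric with
`C₁⁻¹ d(x,y) ≤ ρ(x,y)^α ≤ C₁ d(x,y)` for `0 < α < 1`, then for every `s > 0`
there is `C'` with `|ρ(x,z)^{-s} - ρ(y,z)^{-s}| ≤ C' d(x,y)^{1/α} / min(d(x,z),d(y,z))^{s/α+1/α}`
whenever `z ≠ x` and `z ≠ y`. -/
theorem stmt_17 (E : Type*) (ρ d : E → E → ℝ) (α : ℝ) (hα0 : 0 < α) (hα1 : α < 1)
    (C₁ : ℝ) (hC₁ : 1 ≤ C₁)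
    (hρ_nonneg : ∀ x y, 0 ≤ ρ x y)
    (hρ_symm : ∀ x y, ρ x y = ρ y x)
    (hρ_tri : ∀ x y z, ρ x z ≤ ρ x y + ρ y z)
    (hρ_eq : ∀ x y, ρ x y = 0 ↔ x = y)
    (hd_nonneg : ∀ x y, 0 ≤ d x y)
    (hd_symm : ∀ x y, d x y = d y x)
    (hd_tri : ∀ x y z, d x z ≤ d x y + d y z)
    (hd_eq : ∀ x y, d x y = 0 ↔ x = y)
    (hsnow : ∀ x y, C₁⁻¹ * d x y ≤ ρ x y ^ α ∧ ρ x y ^ α ≤ C₁ * d x y)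
    (s : ℝ) (hs : 0 < s) :
    ∃ C' : ℝ, 0 < C' ∧ ∀ x y z : E, z ≠ x → z ≠ y →
      |ρ x z ^ (-s) - ρ y z ^ (-s)|
        ≤ C' * d x y ^ (1 / α) / min (d x z) (d y z) ^ (s / α + 1 / α) := by
  have hC₁0 : (0:ℝ) < C₁ := lt_of_lt_of_le one_pos hC₁
  refine ⟨s * C₁ ^ ((s + 2) / α), by positivity, ?_⟩
  have key : ∀ x y z : E, z ≠ x → z ≠ y → ρ x z ≤ ρ y z →
      |ρ x z ^ (-s) - ρ y z ^ (-s)|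
        ≤ s * C₁ ^ ((s + 2) / α) * d x y ^ (1 / α) / min (d x z) (d y z) ^ (s / α + 1 / α) := by
    intro x y z hzx hzy hab
    have hα : α ≠ 0 := hα0.ne'
    have hxz : ρ x z ≠ 0 := fun h => hzx ((hρ_eq x z).1 h).symm
    have ha : 0 < ρ x z := lt_of_le_of_ne (hρ_nonneg x z) (Ne.symm hxz)
    have hb : 0 < ρ y z := lt_of_lt_of_le ha hab
    have hdxz : 0 < d x z :=
      lt_of_le_of_ne (hd_nonneg x z) (fun h => hzx ((hd_eq x z).1 h.symm).symm)
    have hdyz : 0 < d y z :=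
      lt_of_le_of_ne (hd_nonneg y z) (fun h => hzy ((hd_eq y z).1 h.symm).symm)
    set m : ℝ := min (d x z) (d y z) with hm_def
    have hm : 0 < m := lt_min hdxz hdyz
    -- Step 1: mean value bound
    have step1 := rpow_neg_sub_le_aux17 s hs ha hab
    -- Step 2: triangle inequality
    have step2 : ρ y z - ρ x z ≤ ρ x y := by
      have := hρ_tri y x z
      rw [hρ_symm y x] at this
      linarith
    -- Step 3: ρ x y ≤ C₁^(1/α) * d x y^(1/α)
    have step3 : ρ x y ≤ C₁ ^ (1/α) * d x y ^ (1/α) := by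
      have h1 : ρ x y = (ρ x y ^ α) ^ (1/α) := by
        rw [← Real.rpow_mul (hρ_nonneg x y), mul_one_div, div_self hα, Real.rpow_one]
      rw [h1, ← Real.mul_rpow hC₁0.le (hd_nonneg x y)]
      exact Real.rpow_le_rpow (Real.rpow_nonneg (hρ_nonneg x y) α) (hsnow x y).2
        (by positivity)
    -- Step 4: lower bound on ρ x z
    have step4 : (C₁⁻¹ * m) ^ (1/α) ≤ ρ x z := by
      have h1 : C₁⁻¹ * m ≤ ρ x z ^ α := by
        refine le_trans ?_ (hsnow x z).1
        exact mul_le_mul_of_nonneg_left (min_le_left _ _) (by positivity)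
      have h2 : (C₁⁻¹ * m) ^ (1/α) ≤ (ρ x z ^ α) ^ (1/α) :=
        Real.rpow_le_rpow (by positivity) h1 (by positivity)
      rwa [← Real.rpow_mul ha.le, mul_one_div, div_self hα, Real.rpow_one] at h2
    have step5 : ρ x z ^ (-s - 1) ≤ C₁ ^ ((s+1)/α) * m ^ (-(s/α + 1/α)) := by
      have h1 : ρ x z ^ (-s-1) ≤ ((C₁⁻¹ * m) ^ (1/α)) ^ (-s-1) :=
        Real.rpow_le_rpow_of_nonpos (by positivity) step4 (by linarith)
      refine h1.trans_eq ?_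
      rw [← Real.rpow_mul (by positivity), Real.mul_rpow (by positivity) hm.le,
        Real.inv_rpow hC₁0.le, ← Real.rpow_neg hC₁0.le]
      congr 2
      · field_simp; ring
      · field_simp; ring
    have hA : 0 ≤ ρ x z ^ (-s - 1) := Real.rpow_nonneg ha.le _
    calc |ρ x z ^ (-s) - ρ y z ^ (-s)|
        ≤ s * ρ x z ^ (-s - 1) * (ρ y z - ρ x z) := step1
      _ ≤ s * ρ x z ^ (-s - 1) * ρ x y := by
          apply mul_le_mul_of_nonneg_left step2 (by positivity)
      _ ≤ s * (C₁ ^ ((s+1)/α) * m ^ (-(s/α + 1/α))) * (C₁ ^ (1/α) * d x y ^ (1/α)) := by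
          have hρ0 : 0 ≤ ρ x y := hρ_nonneg x y
          have h := mul_le_mul step5 step3 hρ0 (by positivity)
          nlinarith [mul_le_mul_of_nonneg_left h hs.le]
      _ = s * C₁ ^ ((s + 2) / α) * d x y ^ (1 / α) / m ^ (s / α + 1 / α) := by
          rw [Real.rpow_neg hm.le, div_eq_mul_inv,
            show (s+2)/α = (s+1)/α + 1/α by field_simp; ring, Real.rpow_add hC₁0]
          ring
  intro x y z hzx hzy
  rcases le_total (ρ x z) (ρ y z) with h | h
  · exact key x y z hzx hzy h
  · have := key y x z hzy hzx h
    rwa [abs_sub_comm, hd_symm y x, min_comm (d y z)] at this
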